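/- Two monotone spirals winding in opposite directions intersect infinitely often: if f, g : [0, ∞) → (0, ∞) are continuous strictly decreasing functions tending to 0, then the curves ψ ↦ (f(ψ)cos ψ, f(ψ)sin ψ) and ψ ↦ (g(ψ)cos(−ψ), g(ψ)sin(−ψ)) have infinitely many points of intersection in the punctured plane. -/
import Mathlib


open Real Set Filter

/-- Two monotone spirals winding in opposite directions intersect infinitely
often: if `f, g : [0,∞) → (0,∞)` are continuous, strictly decreasing and tend
to `0`, then the counterclockwise spiral `ψ ↦ (f ψ cos ψ, f ψ sin ψ)` and the
clockwise spiral `ψ ↦ (g ψ cos (−ψ), g ψ sin (−ψ))` have infinitely many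
intersection points in the punctured plane. -/
theorem opposite_spirals_intersect_infinitely
    (f g : ℝ → ℝ)
    (hf : ContinuousOn f (Ici 0)) (hg : ContinuousOn g (Ici 0))
    (hfanti : StrictAntiOn f (Ici 0)) (hganti : StrictAntiOn g (Ici 0))
    (hfpos : ∀ ψ ∈ Ici (0:ℝ), 0 < f ψ) (hgpos : ∀ ψ ∈ Ici (0:ℝ), 0 < g ψ)
    (hflim : Tendsto f atTop (nhds 0)) (hglim : Tendsto g atTop (nhds 0)) :
    Set.Infinite {p : ℝ × ℝ |
      (∃ ψ ∈ Ici (0:ℝ), p = (f ψ * cos ψ, f ψ * sin ψ)) ∧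
      (∃ ψ ∈ Ici (0:ℝ), p = (g ψ * cos (-ψ), g ψ * sin (-ψ)))} := by
  have hπ : (0:ℝ) < 2 * π := by positivity
  have hf0 : 0 < f 0 := hfpos 0 self_mem_Ici
  have hg0 : 0 < g 0 := hgpos 0 self_mem_Ici
  have hev : ∀ᶠ x in atTop, f x < g 0 ∧ g x < f 0 :=
    (hflim.eventually (eventually_lt_nhds hg0)).and
      (hglim.eventually (eventually_lt_nhds hf0))
  obtain ⟨M, hM⟩ := eventually_atTop.mp hev
  obtain ⟨K, hK⟩ := exists_nat_ge (M / (2 * π))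
  have hMK : M ≤ (K : ℝ) * (2 * π) := (div_le_iff₀ hπ).mp hK
  set T : ℕ → ℝ := fun n => ((n + K : ℕ) : ℝ) * (2 * π) with hT
  have hTM : ∀ n, M ≤ T n := by
    intro n
    refine hMK.trans ?_
    have h1 : (K : ℝ) ≤ ((n + K : ℕ) : ℝ) := by exact_mod_cast Nat.le_add_left K n
    simp only [hT]
    nlinarith
  have hT0 : ∀ n, 0 ≤ T n := fun n => by positivity
  -- for each n find ψ with f ψ = g (T n - ψ)
  have key : ∀ n : ℕ, ∃ ψ, ψ ∈ Icc 0 (T n) ∧ f ψ = g (T n - ψ) := by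
    intro n
    set F : ℝ → ℝ := fun ψ => f ψ - g (T n - ψ) with hF
    have hcont : ContinuousOn F (Icc 0 (T n)) := by
      apply ContinuousOn.sub
      · exact hf.mono (fun x hx => hx.1)
      · refine (hg.comp (Continuous.continuousOn (by continuity)) ?_)
        intro x hx
        simp only [mem_Ici]
        linarith [hx.2]
    have hmem : (0:ℝ) ∈ Icc (F (T n)) (F 0) := by
      constructor
      · have := (hM (T n) (hTM n)).1
        simp only [hF, sub_self]
        linarith
      · have := (hM (T n) (hTM n)).2
        simp only [hF, sub_zero]
        linarith
    obtain ⟨ψ, hψ, hFψ⟩ := intermediate_value_Icc' (hT0 n) hcont hmem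
    exact ⟨ψ, hψ, by simpa [hF, sub_eq_zero] using hFψ⟩
  choose ψ hψ hfg using key
  have hψ0 : ∀ n, ψ n ∈ Ici (0:ℝ) := fun n => (hψ n).1
  have hψT : ∀ n, T n - ψ n ∈ Ici (0:ℝ) := fun n => by
    simp only [mem_Ici]; linarith [(hψ n).2]
  refine Set.infinite_of_injective_forall_mem
    (f := fun n : ℕ => (f (ψ n) * cos (ψ n), f (ψ n) * sin (ψ n))) ?_ ?_
  · -- injectivity
    intro a b hab
    simp only [Prod.mk.injEq] at hab
    obtain ⟨h1, h2⟩ := hab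
    have hfeq : f (ψ a) = f (ψ b) := by
      have hsq : f (ψ a) ^ 2 = f (ψ b) ^ 2 := by
        have ca := sin_sq_add_cos_sq (ψ a)
        have cb := sin_sq_add_cos_sq (ψ b)
        have e1 : f (ψ a) ^ 2 = (f (ψ b) * cos (ψ b)) ^ 2 + (f (ψ b) * sin (ψ b)) ^ 2 := by
          rw [← h1, ← h2]; linear_combination (-(f (ψ a)) ^ 2) * ca
        have e2 : f (ψ b) ^ 2 = (f (ψ b) * cos (ψ b)) ^ 2 + (f (ψ b) * sin (ψ b)) ^ 2 := by
          linear_combination (-(f (ψ b)) ^ 2) * cb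
        linarith
      have ha := hfpos _ (hψ0 a)
      have hb := hfpos _ (hψ0 b)
      nlinarith [hsq, ha, hb]
    have hψeq : ψ a = ψ b := hfanti.injOn (hψ0 a) (hψ0 b) hfeq
    have hgeq : g (T a - ψ a) = g (T b - ψ a) := by
      rw [← hfg a, hψeq, hfg b]
    have hTeq : T a - ψ a = T b - ψ a :=
      hganti.injOn (hψT a) (hψeq ▸ hψT b) hgeq
    have : T a = T b := by linarith
    have h' : ((a + K : ℕ) : ℝ) * (2 * π) = ((b + K : ℕ) : ℝ) * (2 * π) := by
      simpa only [hT] using this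
    have h'' : ((a + K : ℕ) : ℝ) = ((b + K : ℕ) : ℝ) := mul_right_cancel₀ hπ.ne' h'
    have : a + K = b + K := by exact_mod_cast h''
    omega
  · -- membership
    intro n
    constructor
    · exact ⟨ψ n, hψ0 n, rfl⟩
    · refine ⟨T n - ψ n, hψT n, ?_⟩
      have hc : cos (-(T n - ψ n)) = cos (ψ n) := by
        have : -(T n - ψ n) = ψ n - ((n + K : ℕ) : ℝ) * (2 * π) := by
          simp only [hT]; ring
        rw [this, Real.cos_periodic.sub_nat_mul_eq]
      have hs : sin (-(T n - ψ n)) = sin (ψ n) := by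
        have : -(T n - ψ n) = ψ n - ((n + K : ℕ) : ℝ) * (2 * π) := by
          simp only [hT]; ring
        rw [this, Real.sin_periodic.sub_nat_mul_eq]
      rw [hc, hs, ← hfg n]
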